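/- Let V₀ be a real Hilbert space, a : V₀ × V₀ → ℝ a continuous symmetric coercive bilinear form with continuity constant M_a and coercivity constant m_a > 0, L ∈ V₀*, α > 0, and Φ : V₀ → ℝ with Φ(v) ≤ 0 for all v. If u, w ∈ V₀ satisfy a(u, w − u) + α Φ(w − u) ≥ L(w − u), then −Φ(w − u) ≤ (1/α)·(1/m_a)·(M_a‖w‖ + ‖L‖)². -/
import Mathlib


theorem stmt_9 {V₀ : Type*} [NormedAddCommGroup V₀] [InnerProductSpace ℝ V₀]
    [CompleteSpace V₀]
    (a : V₀ →ₗ[ℝ] V₀ →ₗ[ℝ] ℝ) (M_a m_a : ℝ) (hm : 0 < m_a) (hMm : m_a ≤ M_a)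
    (ha_cont : ∀ u v : V₀, |a u v| ≤ M_a * ‖u‖ * ‖v‖)
    (ha_symm : ∀ u v : V₀, a u v = a v u)
    (ha_coer : ∀ v : V₀, a v v ≥ m_a * ‖v‖ ^ 2)
    (L : V₀ →L[ℝ] ℝ) (α : ℝ) (hα : 0 < α)
    (Φ : V₀ → ℝ) (hΦ : ∀ v : V₀, Φ v ≤ 0)
    (u w : V₀) (hineq : a u (w - u) + α * Φ (w - u) ≥ L (w - u)) :
    -Φ (w - u) ≤ (1 / α) * (1 / m_a) * (M_a * ‖w‖ + ‖L‖) ^ 2 := by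
  have hX := norm_nonneg u
  have hW := norm_nonneg w
  have hN := norm_nonneg L
  have h1 := abs_le.mp (ha_cont u w)
  have h2 : a u u ≥ m_a * ‖u‖ ^ 2 := ha_coer u
  have h3 := abs_le.mp (L.le_opNorm (w - u))
  have h4 : ‖w - u‖ ≤ ‖w‖ + ‖u‖ := norm_sub_le _ _
  have h5 : a u (w - u) = a u w - a u u := map_sub _ _ _
  have hL : L (w - u) ≥ -(‖L‖ * (‖w‖ + ‖u‖)) := by nlinarith [h3.1]
  have key : α * (-Φ (w - u)) ≤ M_a * ‖u‖ * ‖w‖ - m_a * ‖u‖ ^ 2 + ‖L‖ * (‖w‖ + ‖u‖) := by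
    nlinarith [h1.2]
  have main : α * m_a * (-Φ (w - u)) ≤ (M_a * ‖w‖ + ‖L‖) ^ 2 := by
    nlinarith [mul_le_mul_of_nonneg_left key hm.le,
      sq_nonneg (M_a * ‖w‖ + ‖L‖ - 2 * m_a * ‖u‖), sq_nonneg (M_a * ‖w‖ - ‖L‖),
      mul_nonneg (mul_nonneg (sub_nonneg.mpr hMm) hW) hN]
  have hpos : 0 < α * m_a := mul_pos hα hm
  rw [show (1 / α) * (1 / m_a) * (M_a * ‖w‖ + ‖L‖) ^ 2
      = (M_a * ‖w‖ + ‖L‖) ^ 2 / (α * m_a) by field_simp]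
  rw [le_div_iff₀ hpos]
  nlinarith [main]
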